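/- Let z₂, z₃, z₄, z₅, z₆, z₇ be positive real numbers. Then there exists exactly one pair (a, b) of positive real numbers satisfying a⁴ = (z₅ + z₇/b²)/(z₄ + z₂·b²) and b⁴ = (z₃ + z₇/a²)/(z₆ + z₂·a²). -/

import Mathlib

private lemma sq_inj_pos {a b : ℝ} (ha : 0 < a) (hb : 0 < b) (h : a ^ 2 = b ^ 2) : a = b := by
  have h0 : (a - b) * (a + b) = 0 := by linear_combination h
  rcases mul_eq_zero.mp h0 with h1 | h1
  · linarith
  · linarith

private lemma le_of_sq_le_sq'' {a b : ℝ} (hb : 0 ≤ b) (h : a ^ 2 ≤ b ^ 2) (ha : 0 ≤ a) :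
    a ≤ b := by
  nlinarith

private noncomputable def vfn (z2 z3 z6 z7 u : ℝ) : ℝ :=
  Real.sqrt ((z3*u+z7)/(u*(z6+z2*u)))

private noncomputable def Gfn (z2 z3 z4 z5 z6 z7 u : ℝ) : ℝ :=
  u^2 - (z5 * vfn z2 z3 z6 z7 u + z7) / (vfn z2 z3 z6 z7 u * (z4 + z2 * vfn z2 z3 z6 z7 u))

private lemma endpoint0 (z2 z3 z4 z5 z6 z7 K s v₀ : ℝ)
    (h2 : 0 < z2) (h3 : 0 < z3) (h4 : 0 < z4) (h5 : 0 < z5) (h6 : 0 < z6) (h7 : 0 < z7)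
    (hK : 0 < K) (hK2 : K^2 = (z3+z7)/z6)
    (hs : 0 < s) (hs1 : s ≤ 1/2) (hs2 : 2*s*(z4+z2*K) ≤ z5)
    (hv₀ : 0 < v₀) (hv₀2 : v₀^2 = (z3*s^2+z7)/(s^2*(z6+z2*s^2))) :
    (s^2)^2 - (z5*v₀+z7)/(v₀*(z4+z2*v₀)) < 0 := by
  have hbd : v₀ * s ≤ K := by
    apply le_of_sq_le_sq'' hK.le _ (mul_nonneg hv₀.le hs.le)
    have hsne : s ≠ 0 := hs.ne'
    have hzne : (z6+z2*s^2) ≠ 0 := (add_pos h6 (mul_pos h2 (by positivity))).ne'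
    have e : (v₀*s)^2 = (z3*s^2+z7)/(z6+z2*s^2) := by
      rw [mul_pow, hv₀2]
      field_simp
    rw [e, hK2]
    have hs4 : s^2 ≤ 1 := by nlinarith
    apply div_le_div₀ (by positivity)
      (by nlinarith [mul_nonneg h3.le (by linarith : (0:ℝ) ≤ 1 - s^2)]) h6
      (by nlinarith [mul_nonneg h2.le (sq_nonneg s)])
  have hs4 : s^2 ≤ 1/4 := by nlinarith
  have hA : s^4*(z4+z2*v₀) < z5 := by
    nlinarith [mul_le_mul_of_nonneg_left hbd (by positivity : (0:ℝ) ≤ z2*s^3),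
               mul_le_mul_of_nonneg_left hs2 (by positivity : (0:ℝ) ≤ s^2),
               mul_nonneg (by positivity : (0:ℝ) ≤ z4*s^3) (by linarith : (0:ℝ) ≤ 1 - s),
               mul_le_mul_of_nonneg_left hs4 h5.le]
  have hden : 0 < v₀*(z4+z2*v₀) := mul_pos hv₀ (add_pos h4 (mul_pos h2 hv₀))
  rw [sub_neg, lt_div_iff₀ hden]
  nlinarith [mul_lt_mul_of_pos_right hA hv₀, h7]

private lemma endpoint1 (z2 z3 z4 z5 z6 z7 L u₁ v₁ : ℝ)
    (h2 : 0 < z2) (h3 : 0 < z3) (h4 : 0 < z4) (h5 : 0 < z5) (h6 : 0 < z6) (h7 : 0 < z7)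
    (hL : 0 < L) (hL2 : L^2 = z7/(z6+z2))
    (hu₁1 : 1 ≤ u₁) (hu1e : z4*L*u₁ = z4*L + z5*L + z7)
    (hv₁ : 0 < v₁) (hv₁2 : v₁^2 = (z3*u₁+z7)/(u₁*(z6+z2*u₁))) :
    0 < u₁^2 - (z5*v₁+z7)/(v₁*(z4+z2*v₁)) := by
  have hu₁ : 0 < u₁ := by linarith
  have hbd : L ≤ u₁ * v₁ := by
    apply le_of_sq_le_sq'' (mul_nonneg hu₁.le hv₁.le) _ hL.le
    have hune : u₁ ≠ 0 := hu₁.ne'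
    have hzne : (z6+z2*u₁) ≠ 0 := (add_pos h6 (mul_pos h2 hu₁)).ne'
    have e : (u₁*v₁)^2 = (u₁*(z3*u₁+z7))/(z6+z2*u₁) := by
      rw [mul_pow, hv₁2]
      field_simp
    rw [hL2, e]
    rw [div_le_div_iff₀ (by positivity) (add_pos h6 (mul_pos h2 hu₁))]
    nlinarith [hu₁1, mul_pos h3 hu₁, mul_pos h7 hu₁, mul_pos h3 (mul_pos hu₁ hu₁),
               mul_nonneg (mul_nonneg h2.le h7.le) (by linarith : (0:ℝ) ≤ u₁ - 1),
               mul_nonneg (mul_nonneg h6.le h7.le) (by linarith : (0:ℝ) ≤ u₁ - 1)]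
  have key : z5*v₁ + z7 < z4*u₁^2*v₁ := by
    have ha : z4*L*u₁^2*v₁ = (z4*L + z5*L + z7)*(u₁*v₁) := by
      linear_combination (u₁*v₁) * hu1e
    have hb2 : z4*L*(u₁*v₁) + z5*L*v₁ + z7*L ≤ (z4*L + z5*L + z7)*(u₁*v₁) := by
      nlinarith [hbd, hu₁1, hv₁, hL,
                 mul_nonneg (mul_nonneg h5.le hL.le)
                   (mul_nonneg (by linarith : (0:ℝ) ≤ u₁ - 1) hv₁.le)]
    have h3' : L*(z5*v₁+z7) < L*(z4*u₁^2*v₁) := by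
      nlinarith [mul_pos (mul_pos h4 hL) (mul_pos hu₁ hv₁)]
    exact lt_of_mul_lt_mul_left h3' hL.le
  have hden : 0 < v₁*(z4+z2*v₁) := mul_pos hv₁ (add_pos h4 (mul_pos h2 hv₁))
  rw [sub_pos, div_lt_iff₀ hden]
  nlinarith [key, mul_pos (mul_pos h2 (mul_pos hu₁ hu₁)) (mul_pos hv₁ hv₁)]

private lemma core_exists (z2 z3 z4 z5 z6 z7 : ℝ)
    (h2 : 0 < z2) (h3 : 0 < z3) (h4 : 0 < z4)
    (h5 : 0 < z5) (h6 : 0 < z6) (h7 : 0 < z7) :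
    ∃ u v : ℝ, 0 < u ∧ 0 < v ∧
      u^2 * (v*(z4+z2*v)) = z5*v+z7 ∧ v^2 * (u*(z6+z2*u)) = z3*u+z7 := by
  have hQpos : ∀ u : ℝ, 0 < u → 0 < (z3*u+z7)/(u*(z6+z2*u)) := by
    intro u hu
    exact div_pos (by positivity) (mul_pos hu (add_pos h6 (mul_pos h2 hu)))
  have hvpos : ∀ u : ℝ, 0 < u → 0 < vfn z2 z3 z6 z7 u := by
    intro u hu
    exact Real.sqrt_pos.mpr (hQpos u hu)
  have hvsq : ∀ u : ℝ, 0 < u → (vfn z2 z3 z6 z7 u)^2 = (z3*u+z7)/(u*(z6+z2*u)) := by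
    intro u hu
    exact Real.sq_sqrt (hQpos u hu).le
  obtain ⟨K, hK, hK2⟩ : ∃ K : ℝ, 0 < K ∧ K^2 = (z3+z7)/z6 :=
    ⟨Real.sqrt ((z3+z7)/z6), Real.sqrt_pos.mpr (by positivity), Real.sq_sqrt (by positivity)⟩
  obtain ⟨L, hL, hL2⟩ : ∃ L : ℝ, 0 < L ∧ L^2 = z7/(z6+z2) :=
    ⟨Real.sqrt (z7/(z6+z2)), Real.sqrt_pos.mpr (by positivity), Real.sq_sqrt (by positivity)⟩
  obtain ⟨s, hs, hs1, hs2⟩ : ∃ s : ℝ, 0 < s ∧ s ≤ 1/2 ∧ 2*s*(z4+z2*K) ≤ z5 := by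
    refine ⟨min (1/2) (z5/(2*(z4+z2*K))), lt_min (by norm_num) (by positivity),
      min_le_left _ _, ?_⟩
    have hm := min_le_right (1/2 : ℝ) (z5/(2*(z4+z2*K)))
    have hd : 0 < z4+z2*K := by positivity
    have := (le_div_iff₀ (by positivity : 0 < 2*(z4+z2*K))).mp hm
    nlinarith [this]
  obtain ⟨u₁, hu₁1, hu1e⟩ : ∃ u₁ : ℝ, 1 ≤ u₁ ∧ z4*L*u₁ = z4*L + z5*L + z7 := by
    refine ⟨1 + z5/z4 + z7/(z4*L), ?_, ?_⟩
    · have h1 : 0 ≤ z5/z4 := by positivity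
      have h2' : 0 ≤ z7/(z4*L) := by positivity
      linarith
    · field_simp
  have hu₁ : 0 < u₁ := by linarith
  have hu₀ : 0 < s^2 := by positivity
  have hu01 : s^2 ≤ u₁ := by nlinarith
  have hmem : ∀ x ∈ Set.Icc (s^2) u₁, 0 < x := fun x hx => lt_of_lt_of_le hu₀ hx.1
  have hvc : ContinuousOn (vfn z2 z3 z6 z7) (Set.Icc (s^2) u₁) := by
    apply ContinuousOn.sqrt
    apply ContinuousOn.div (by fun_prop) (by fun_prop)
    intro x hx
    have hx' := hmem x hx
    exact (mul_pos hx' (add_pos h6 (mul_pos h2 hx'))).ne'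
  have hGc : ContinuousOn (Gfn z2 z3 z4 z5 z6 z7) (Set.Icc (s^2) u₁) := by
    apply ContinuousOn.sub (by fun_prop)
    apply ContinuousOn.div
    · exact (continuousOn_const.mul hvc).add continuousOn_const
    · exact hvc.mul (continuousOn_const.add (continuousOn_const.mul hvc))
    · intro x hx
      have hvx := hvpos x (hmem x hx)
      exact (mul_pos hvx (add_pos h4 (mul_pos h2 hvx))).ne'
  have hGu₀ : Gfn z2 z3 z4 z5 z6 z7 (s^2) < 0 := by
    unfold Gfn
    exact endpoint0 z2 z3 z4 z5 z6 z7 K s _ h2 h3 h4 h5 h6 h7 hK hK2 hs hs1 hs2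
      (hvpos _ hu₀) (hvsq _ hu₀)
  have hGu₁ : 0 < Gfn z2 z3 z4 z5 z6 z7 u₁ := by
    unfold Gfn
    exact endpoint1 z2 z3 z4 z5 z6 z7 L u₁ _ h2 h3 h4 h5 h6 h7 hL hL2 hu₁1 hu1e
      (hvpos _ hu₁) (hvsq _ hu₁)
  have hsub : Set.Icc (Gfn z2 z3 z4 z5 z6 z7 (s^2)) (Gfn z2 z3 z4 z5 z6 z7 u₁)
      ⊆ Gfn z2 z3 z4 z5 z6 z7 '' Set.Icc (s^2) u₁ := intermediate_value_Icc hu01 hGc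
  obtain ⟨u, huIcc, hGu⟩ := hsub ⟨hGu₀.le, hGu₁.le⟩
  have hupos : 0 < u := hmem u huIcc
  refine ⟨u, vfn z2 z3 z6 z7 u, hupos, hvpos u hupos, ?_, ?_⟩
  · have hvu := hvpos u hupos
    have hden : 0 < vfn z2 z3 z6 z7 u * (z4 + z2 * vfn z2 z3 z6 z7 u) :=
      mul_pos hvu (add_pos h4 (mul_pos h2 hvu))
    unfold Gfn at hGu
    have h := sub_eq_zero.mp hGu
    rw [eq_div_iff hden.ne'] at h
    exact h
  · rw [hvsq u hupos, div_mul_cancel₀]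
    exact (mul_pos hupos (add_pos h6 (mul_pos h2 hupos))).ne'

private lemma core_no_lt (z2 z3 z4 z5 z6 z7 : ℝ)
    (h2 : 0 < z2) (h3 : 0 < z3) (h4 : 0 < z4)
    (h5 : 0 < z5) (h6 : 0 < z6) (h7 : 0 < z7)
    {u v U V : ℝ} (hu : 0 < u) (hv : 0 < v) (hU : 0 < U) (hV : 0 < V)
    (e1 : u^2 * (v*(z4+z2*v)) = z5*v+z7)
    (e2 : v^2 * (u*(z6+z2*u)) = z3*u+z7)
    (E1 : U^2 * (V*(z4+z2*V)) = z5*V+z7)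
    (E2 : V^2 * (U*(z6+z2*U)) = z3*U+z7)
    (hlt : u < U) : False := by
  -- strict decrease of v in u (second equation) gives V < v
  have hd : 0 < U - u := sub_pos.mpr hlt
  have hp1 : (z3*U+z7) * (u*(z6+z2*u)) < (z3*u+z7) * (U*(z6+z2*U)) := by
    nlinarith [mul_pos (mul_pos (mul_pos h2 h3) (mul_pos hu hU)) hd,
               mul_pos (mul_pos h6 h7) hd,
               mul_pos (mul_pos (mul_pos h2 h7) (by linarith : (0:ℝ) < U + u)) hd]
  have hsq : V^2 < v^2 := by
    have l : V^2 * ((u*(z6+z2*u)) * (U*(z6+z2*U))) = (z3*U+z7)*(u*(z6+z2*u)) := by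
      linear_combination (u*(z6+z2*u)) * E2
    have r : v^2 * ((u*(z6+z2*u)) * (U*(z6+z2*U))) = (z3*u+z7)*(U*(z6+z2*U)) := by
      linear_combination (U*(z6+z2*U)) * e2
    have h' : V^2 * ((u*(z6+z2*u)) * (U*(z6+z2*U))) < v^2 * ((u*(z6+z2*u)) * (U*(z6+z2*U))) := by
      rw [l, r]; exact hp1
    exact lt_of_mul_lt_mul_right h' (by positivity)
  have hVv : V < v := by nlinarith [hsq, hv, hV]
  -- (u*v)^2 < (U*V)^2 from second equations
  have k1 : (u*v)^2 * (z6+z2*u) = u*(z3*u+z7) := by linear_combination u * e2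
  have K1 : (U*V)^2 * (z6+z2*U) = U*(z3*U+z7) := by linear_combination U * E2
  have poly1 : u*(z3*u+z7)*(z6+z2*U) < U*(z3*U+z7)*(z6+z2*u) := by
    nlinarith [mul_pos (mul_pos (mul_pos h2 h3) (mul_pos hu hU)) hd,
               mul_pos (mul_pos h6 h7) hd,
               mul_pos (mul_pos (mul_pos h3 h6) (by linarith : (0:ℝ) < U + u)) hd]
  have s3 : (u*v)^2 < (U*V)^2 := by
    have h' : (u*v)^2 * ((z6+z2*u)*(z6+z2*U)) < (U*V)^2 * ((z6+z2*u)*(z6+z2*U)) := by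
      have l : (u*v)^2 * ((z6+z2*u)*(z6+z2*U)) = u*(z3*u+z7)*(z6+z2*U) := by
        linear_combination (z6+z2*U) * k1
      have r : (U*V)^2 * ((z6+z2*u)*(z6+z2*U)) = U*(z3*U+z7)*(z6+z2*u) := by
        linear_combination (z6+z2*u) * K1
      rw [l, r]; exact poly1
    exact lt_of_mul_lt_mul_right h' (by positivity)
  -- (U*V)^2 < (u*v)^2 from first equations
  have k2 : (u*v)^2 * (z4+z2*v) = v*(z5*v+z7) := by linear_combination v * e1
  have K2 : (U*V)^2 * (z4+z2*V) = V*(z5*V+z7) := by linear_combination V * E1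
  have hdv : 0 < v - V := sub_pos.mpr hVv
  have poly2 : V*(z5*V+z7)*(z4+z2*v) < v*(z5*v+z7)*(z4+z2*V) := by
    nlinarith [mul_pos (mul_pos (mul_pos h2 h5) (mul_pos hv hV)) hdv,
               mul_pos (mul_pos h4 h7) hdv,
               mul_pos (mul_pos (mul_pos h4 h5) (by linarith : (0:ℝ) < v + V)) hdv]
  have s4 : (U*V)^2 < (u*v)^2 := by
    have h' : (U*V)^2 * ((z4+z2*V)*(z4+z2*v)) < (u*v)^2 * ((z4+z2*V)*(z4+z2*v)) := by
      have l : (U*V)^2 * ((z4+z2*V)*(z4+z2*v)) = V*(z5*V+z7)*(z4+z2*v) := by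
        linear_combination (z4+z2*v) * K2
      have r : (u*v)^2 * ((z4+z2*V)*(z4+z2*v)) = v*(z5*v+z7)*(z4+z2*V) := by
        linear_combination (z4+z2*V) * k2
      rw [l, r]; exact poly2
    exact lt_of_mul_lt_mul_right h' (by positivity)
  linarith

private lemma core_unique (z2 z3 z4 z5 z6 z7 : ℝ)
    (h2 : 0 < z2) (h3 : 0 < z3) (h4 : 0 < z4)
    (h5 : 0 < z5) (h6 : 0 < z6) (h7 : 0 < z7)
    {u v U V : ℝ} (hu : 0 < u) (hv : 0 < v) (hU : 0 < U) (hV : 0 < V)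
    (e1 : u^2 * (v*(z4+z2*v)) = z5*v+z7)
    (e2 : v^2 * (u*(z6+z2*u)) = z3*u+z7)
    (E1 : U^2 * (V*(z4+z2*V)) = z5*V+z7)
    (E2 : V^2 * (U*(z6+z2*U)) = z3*U+z7) : u = U ∧ v = V := by
  rcases lt_trichotomy u U with h | h | h
  · exact (core_no_lt z2 z3 z4 z5 z6 z7 h2 h3 h4 h5 h6 h7 hu hv hU hV e1 e2 E1 E2 h).elim
  · subst h
    have hX : u*(z6+z2*u) ≠ 0 := by positivity
    have hvv : v^2 = V^2 := by
      have := e2.trans E2.symm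
      exact mul_right_cancel₀ hX this
    exact ⟨rfl, sq_inj_pos hv hV hvv⟩
  · exact (core_no_lt z2 z3 z4 z5 z6 z7 h2 h3 h4 h5 h6 h7 hU hV hu hv E1 E2 e1 e2 h).elim

theorem ghz_distillation_extremal_system_unique_solution
    (z2 z3 z4 z5 z6 z7 : ℝ)
    (h2 : 0 < z2) (h3 : 0 < z3) (h4 : 0 < z4)
    (h5 : 0 < z5) (h6 : 0 < z6) (h7 : 0 < z7) :
    ∃! p : ℝ × ℝ, 0 < p.1 ∧ 0 < p.2 ∧
      p.1 ^ 4 = (z5 + z7 / p.2 ^ 2) / (z4 + z2 * p.2 ^ 2) ∧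
      p.2 ^ 4 = (z3 + z7 / p.1 ^ 2) / (z6 + z2 * p.1 ^ 2) := by
  obtain ⟨u, v, hu, hv, e1, e2⟩ := core_exists z2 z3 z4 z5 z6 z7 h2 h3 h4 h5 h6 h7
  have hau : (Real.sqrt u) ^ 2 = u := Real.sq_sqrt hu.le
  have hbv : (Real.sqrt v) ^ 2 = v := Real.sq_sqrt hv.le
  have hapos : 0 < Real.sqrt u := Real.sqrt_pos.mpr hu
  have hbpos : 0 < Real.sqrt v := Real.sqrt_pos.mpr hv
  refine ⟨(Real.sqrt u, Real.sqrt v), ⟨hapos, hbpos, ?_, ?_⟩, ?_⟩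
  · show (Real.sqrt u) ^ 4 = (z5 + z7 / (Real.sqrt v) ^ 2) / (z4 + z2 * (Real.sqrt v) ^ 2)
    rw [show (Real.sqrt u) ^ 4 = ((Real.sqrt u) ^ 2) ^ 2 by ring, hau, hbv]
    rw [eq_div_iff (by positivity : (z4 + z2 * v) ≠ 0)]
    field_simp
    linear_combination e1
  · show (Real.sqrt v) ^ 4 = (z3 + z7 / (Real.sqrt u) ^ 2) / (z6 + z2 * (Real.sqrt u) ^ 2)
    rw [show (Real.sqrt v) ^ 4 = ((Real.sqrt v) ^ 2) ^ 2 by ring, hau, hbv]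
    rw [eq_div_iff (by positivity : (z6 + z2 * u) ≠ 0)]
    field_simp
    linear_combination e2
  · rintro ⟨x, y⟩ ⟨hx, hy, ex, ey⟩
    simp only at hx hy ex ey
    have hxne : x ≠ 0 := hx.ne'
    have hyne : y ≠ 0 := hy.ne'
    have Ex : (x^2)^2 * (y^2*(z4+z2*y^2)) = z5*y^2+z7 := by
      rw [eq_div_iff (by positivity : (z4 + z2 * y ^ 2) ≠ 0)] at ex
      field_simp at ex
      linear_combination ex
    have Ey : (y^2)^2 * (x^2*(z6+z2*x^2)) = z3*x^2+z7 := by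
      rw [eq_div_iff (by positivity : (z6 + z2 * x ^ 2) ≠ 0)] at ey
      field_simp at ey
      linear_combination ey
    obtain ⟨hxu, hyv⟩ := core_unique z2 z3 z4 z5 z6 z7 h2 h3 h4 h5 h6 h7
      (by positivity : 0 < x^2) (by positivity : 0 < y^2) hu hv Ex Ey e1 e2
    have hx' : x = Real.sqrt u := sq_inj_pos hx hapos (by rw [hau, hxu])
    have hy' : y = Real.sqrt v := sq_inj_pos hy hbpos (by rw [hbv, hyv])
    simp [hx', hy']
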